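/- arXiv:2302.02191 — 2 statements merged into one kernel-verified Lean document; each statement's English description precedes it below -/
import Mathlib

section
/- For i = 1, 2, let Yi = Hi Xiᵀ with Hi ∈ ℂ^{Nr×L} full column rank and Xi ∈ ℂ^{N̄×L} full column rank, sharing exactly one common column x_c (the remaining columns of X1 and X2, together with x_c, form a linearly independent set of 2L−1 vectors in ℂ^{N̄}). Then the intersection of the row spaces of Y1 and Y2 (i.e., column spaces of Y1ᵀ and Y2ᵀ) is exactly span{x_c}, and in particular is one-dimensional. -/
open Matrix

/-!
Since `H` has full column rank, `x ↦ Hᵀ x` is onto, so the row space of `Y = H Xᵀ` is the column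
space of `X`. Write the second column space as `span{x_c} ⊔ C₂`, where `C₂` is spanned by the
remaining columns of `X₂`; the joint independence hypothesis says that `C₂` meets the first column
space only in `0`, and modularity of the subspace lattice then leaves exactly `span{x_c}`.
-/

theorem inf_sup_eq_of_le_of_disjoint {α : Type*} [Lattice α] [OrderBot α] [IsModularLattice α]
    {a s c : α} (has : a ≤ s) (hsc : Disjoint s c) : s ⊓ (a ⊔ c) = a := by
  rw [inf_comm, sup_inf_assoc_of_le c has, hsc.symm.eq_bot, sup_bot_eq]

theorem Submodule.span_range_eq_span_singleton_sup {R M ι : Type*} [Semiring R]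
    [AddCommMonoid M] [Module R M] (f : ι → M) (i : ι) :
    span R (Set.range f) = R ∙ f i ⊔ span R (Set.range fun j : {j // j ≠ i} => f j) := by
  rw [← Set.insert_image_compl_eq_range f i, span_insert, Set.image_eq_range]
  rfl

theorem Matrix.range_mul_mulVecLin_of_surjective {R l m n : Type*} [CommSemiring R] [Fintype l]
    [Fintype m] (A : Matrix n l R) {B : Matrix l m R}
    (hB : Function.Surjective B.mulVecLin) :
    LinearMap.range (A * B).mulVecLin = LinearMap.range A.mulVecLin := by
  rw [mulVecLin_mul, LinearMap.range_comp_of_range_eq_top _ (LinearMap.range_eq_top.mpr hB)]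

section Matrix

variable {K : Type*} [Field K] {l m n : Type*} [Fintype l] [Fintype m]

theorem Matrix.mulVecLin_surjective_of_linearIndependent_rows {M : Matrix l m K}
    (hM : LinearIndependent K M.row) : Function.Surjective M.mulVecLin := by
  rw [← LinearMap.range_eq_top]
  apply Submodule.eq_top_of_finrank_eq
  rw [Module.finrank_fintype_fun_eq_card]
  exact hM.rank_matrix

theorem Matrix.range_transpose_mul_transpose_mulVecLin {H : Matrix m l K} (X : Matrix n l K)
    (hH : LinearIndependent K H.col) :
    LinearMap.range ((H * Xᵀ)ᵀ).mulVecLin = Submodule.span K (Set.range X.col) := by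
  rw [← row_transpose] at hH
  rw [transpose_mul, transpose_transpose,
    range_mul_mulVecLin_of_surjective X (mulVecLin_surjective_of_linearIndependent_rows hH),
    range_mulVecLin]

end Matrix

theorem rowspace_intersection_is_common_signal_general {Nr L Nb : ℕ} [NeZero L]
    (H1 H2 : Matrix (Fin Nr) (Fin L) ℂ)
    (X1 X2 : Matrix (Fin Nb) (Fin L) ℂ)
    (xc : Fin Nb → ℂ) (hxc : xc ≠ 0)
    (hc1 : (fun i => X1 i 0) = xc) (hc2 : (fun i => X2 i 0) = xc)
    (hH1 : LinearIndependent ℂ H1ᵀ) (hH2 : LinearIndependent ℂ H2ᵀ)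
    (hli : LinearIndependent ℂ
      (Sum.elim X1ᵀ (fun j : {j : Fin L // j ≠ 0} => X2ᵀ j.1))) :
    LinearMap.range ((H1 * X1ᵀ)ᵀ).mulVecLin ⊓
        LinearMap.range ((H2 * X2ᵀ)ᵀ).mulVecLin =
      Submodule.span ℂ {xc} ∧
    Module.finrank ℂ
      ↥(LinearMap.range ((H1 * X1ᵀ)ᵀ).mulVecLin ⊓
          LinearMap.range ((H2 * X2ᵀ)ᵀ).mulVecLin) = 1 := by
  have hx2 : X2.col 0 = xc := hc2
  have hxc_mem : xc ∈ Submodule.span ℂ (Set.range X1.col) := Submodule.subset_span ⟨0, hc1⟩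
  have hdisj : Disjoint (Submodule.span ℂ (Set.range X1.col))
      (Submodule.span ℂ (Set.range fun j : {j : Fin L // j ≠ 0} => X2.col j)) :=
    (linearIndependent_sum.mp hli).2.2
  have hinter : LinearMap.range ((H1 * X1ᵀ)ᵀ).mulVecLin ⊓
      LinearMap.range ((H2 * X2ᵀ)ᵀ).mulVecLin = Submodule.span ℂ {xc} := by
    rw [range_transpose_mul_transpose_mulVecLin X1 hH1,
      range_transpose_mul_transpose_mulVecLin X2 hH2,
      Submodule.span_range_eq_span_singleton_sup X2.col 0, hx2]
    exact inf_sup_eq_of_le_of_disjoint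
      ((Submodule.span_singleton_le_iff_mem _ _).mpr hxc_mem) hdisj
  exact ⟨hinter, hinter ▸ finrank_span_singleton hxc⟩

/-- Two-view model `Yi = Hi Xiᵀ`: if `H1, H2` are full column rank, `X1, X2` share
exactly one common column `x_c ≠ 0` (their first columns), and the `2L−1` distinct
columns (`x_c` together with the remaining columns of `X1` and of `X2`) are linearly
independent, then the intersection of the row spaces of `Y1` and `Y2` is exactly
`span{x_c}`, and in particular is one-dimensional. -/
theorem rowspace_intersection_is_common_signal {Nr L Nb : ℕ} [NeZero L]
    (H1 H2 : Matrix (Fin Nr) (Fin L) ℂ)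
    (X1 X2 : Matrix (Fin Nb) (Fin L) ℂ)
    (xc : Fin Nb → ℂ) (hxc : xc ≠ 0)
    (hc1 : (fun i => X1 i 0) = xc) (hc2 : (fun i => X2 i 0) = xc)
    (hH1 : LinearIndependent ℂ H1ᵀ) (hH2 : LinearIndependent ℂ H2ᵀ)
    (hX1 : LinearIndependent ℂ X1ᵀ) (hX2 : LinearIndependent ℂ X2ᵀ)
    (hli : LinearIndependent ℂ
      (Sum.elim X1ᵀ (fun j : {j : Fin L // j ≠ 0} => X2ᵀ j.1))) :
    LinearMap.range ((H1 * X1ᵀ)ᵀ).mulVecLin ⊓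
        LinearMap.range ((H2 * X2ᵀ)ᵀ).mulVecLin =
      Submodule.span ℂ {xc} ∧
    Module.finrank ℂ
      ↥(LinearMap.range ((H1 * X1ᵀ)ᵀ).mulVecLin ⊓
          LinearMap.range ((H2 * X2ᵀ)ᵀ).mulVecLin) = 1 :=
  rowspace_intersection_is_common_signal_general H1 H2 X1 X2 xc hxc hc1 hc2 hH1 hH2 hli
end

section
/- Suppose in the noiseless two-view model Yi = Hi Xiᵀ (i = 1,2) the matrices X1 and X2 share exactly one common column x_c, with the combined set of all 2L−1 distinct columns linearly independent, and H1, H2 full column rank. Then for any unit-norm maximizer g* of gᴴ(P1+P2)g (Pi the projector onto range(Yiᵀ)), there exist combiners q1*, q2* ∈ ℂ^{Nr} achieving zero MAXVAR objective: Y1ᵀq1* = Y2ᵀq2* = g*, and Yiᵀqi* is proportional to x_c; i.e., applying the optimal combiner to the received view exactly equalizes the desired layer's repeated signal. -/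
/-! Since `Hᵢ` has full column rank, `range Yᵢᵀ = range Xᵢ`, and both contain `x_c`. A unit vector
along `x_c` is fixed by both projectors, so it attains `gᴴ(P₁+P₂)g = 2`; as `gᴴPᵢg ≤ ‖g‖²` with
equality only when `Pᵢg = g`, every maximizer is fixed by both projectors, i.e. lies in both ranges,
which yields the combiners `qᵢ`. The linear independence of the `2L − 1` distinct columns makes
`span (columns of X₁)` disjoint from the span of the other columns of `X₂`, so the two ranges meet
only in the line of `x_c`. -/

open Matrix

/-- Squared Euclidean norm of a complex vector. -/
noncomputable def sqNorm {n : ℕ} (v : Fin n → ℂ) : ℝ := ∑ i, ‖v i‖ ^ 2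

section SqNorm

variable {n : ℕ}

lemma re_star_dotProduct_self (v : Fin n → ℂ) : (star v ⬝ᵥ v).re = sqNorm v := by
  simp [sqNorm, dotProduct, Complex.re_sum, ← Complex.normSq_eq_norm_sq, Complex.normSq_apply,
    Complex.mul_re]

lemma sqNorm_nonneg (v : Fin n → ℂ) : 0 ≤ sqNorm v :=
  Finset.sum_nonneg fun _ _ => by positivity

lemma eq_zero_of_sqNorm_eq_zero {v : Fin n → ℂ} (h : sqNorm v = 0) : v = 0 := by
  funext i
  simpa using (Finset.sum_eq_zero_iff_of_nonneg fun _ _ => by positivity).mp h i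
    (Finset.mem_univ i)

lemma sqNorm_smul (c : ℂ) (v : Fin n → ℂ) : sqNorm (c • v) = ‖c‖ ^ 2 * sqNorm v := by
  simp [sqNorm, Finset.mul_sum, mul_pow]

lemma exists_sqNorm_smul_eq_one {v : Fin n → ℂ} (hv : v ≠ 0) : ∃ c : ℂ, sqNorm (c • v) = 1 := by
  have hpos : 0 < sqNorm v :=
    (sqNorm_nonneg v).lt_of_ne fun h => hv (eq_zero_of_sqNorm_eq_zero h.symm)
  refine ⟨((Real.sqrt (sqNorm v))⁻¹ : ℝ), ?_⟩
  rw [sqNorm_smul, Complex.norm_real, Real.norm_eq_abs, sq_abs, inv_pow,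
    Real.sq_sqrt hpos.le, inv_mul_cancel₀ hpos.ne']

end SqNorm

section Projector

variable {n : ℕ} {P : Matrix (Fin n) (Fin n) ℂ}

lemma sqNorm_sub_mulVec_of_isProjector (hherm : Pᴴ = P) (hidem : P * P = P) (g : Fin n → ℂ) :
    sqNorm (g - P *ᵥ g) = sqNorm g - (star g ⬝ᵥ P *ᵥ g).re := by
  have hPg : star (P *ᵥ g) ⬝ᵥ P *ᵥ g = star g ⬝ᵥ P *ᵥ g := by
    rw [star_mulVec, hherm, ← dotProduct_mulVec, mulVec_mulVec, hidem]
  have hsymm : (star (P *ᵥ g) ⬝ᵥ g).re = (star g ⬝ᵥ P *ᵥ g).re := by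
    rw [star_dotProduct]
    simp
  rw [← re_star_dotProduct_self, ← re_star_dotProduct_self, star_sub, sub_dotProduct,
    dotProduct_sub, dotProduct_sub, hPg]
  simp only [Complex.sub_re, hsymm]
  ring

lemma re_star_dotProduct_mulVec_le_of_isProjector (hherm : Pᴴ = P) (hidem : P * P = P)
    (g : Fin n → ℂ) : (star g ⬝ᵥ P *ᵥ g).re ≤ sqNorm g := by
  have := sqNorm_sub_mulVec_of_isProjector hherm hidem g
  linarith [sqNorm_nonneg (g - P *ᵥ g)]

lemma mulVec_eq_self_of_isProjector (hherm : Pᴴ = P) (hidem : P * P = P) {g : Fin n → ℂ}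
    (h : (star g ⬝ᵥ P *ᵥ g).re = sqNorm g) : P *ᵥ g = g := by
  have := sqNorm_sub_mulVec_of_isProjector hherm hidem g
  rw [h, sub_self] at this
  exact (sub_eq_zero.mp (eq_zero_of_sqNorm_eq_zero this)).symm

lemma mulVec_eq_self_of_mem_range (hidem : P * P = P) {v : Fin n → ℂ}
    (hv : v ∈ LinearMap.range P.mulVecLin) : P *ᵥ v = v := by
  obtain ⟨w, rfl⟩ := hv
  rw [mulVecLin_apply, mulVec_mulVec, hidem]

lemma mulVec_eq_self_of_isMax_add_of_isProjector {P₁ P₂ : Matrix (Fin n) (Fin n) ℂ}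
    (h₁herm : P₁ᴴ = P₁) (h₂herm : P₂ᴴ = P₂) (h₁idem : P₁ * P₁ = P₁) (h₂idem : P₂ * P₂ = P₂)
    {u : Fin n → ℂ} (hu : u ≠ 0) (hu₁ : P₁ *ᵥ u = u) (hu₂ : P₂ *ᵥ u = u)
    {g : Fin n → ℂ} (hg : sqNorm g = 1)
    (hmax : ∀ g' : Fin n → ℂ, sqNorm g' = 1 →
      (star g' ⬝ᵥ (P₁ + P₂) *ᵥ g').re ≤ (star g ⬝ᵥ (P₁ + P₂) *ᵥ g).re) :
    P₁ *ᵥ g = g ∧ P₂ *ᵥ g = g := by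
  obtain ⟨c, hc⟩ := exists_sqNorm_smul_eq_one hu
  have hval : (star (c • u) ⬝ᵥ (P₁ + P₂) *ᵥ (c • u)).re = 2 := by
    rw [add_mulVec, mulVec_smul, mulVec_smul, hu₁, hu₂, dotProduct_add, Complex.add_re,
      re_star_dotProduct_self, hc]
    norm_num
  have h2 := hval ▸ hmax _ hc
  rw [add_mulVec, dotProduct_add, Complex.add_re] at h2
  have h₁ := re_star_dotProduct_mulVec_le_of_isProjector h₁herm h₁idem g
  have h₂ := re_star_dotProduct_mulVec_le_of_isProjector h₂herm h₂idem g
  exact ⟨mulVec_eq_self_of_isProjector h₁herm h₁idem (by linarith),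
    mulVec_eq_self_of_isProjector h₂herm h₂idem (by linarith)⟩

end Projector

section Range

variable {K : Type*} [Field K] {m n : Type*} [Fintype n]

lemma mulVecLin_surjective_of_linearIndependent [Fintype m] [DecidableEq m] {M : Matrix m n K}
    (h : LinearIndependent K M) : Function.Surjective M.mulVecLin := by
  rw [← LinearMap.range_eq_top]
  apply Submodule.eq_top_of_finrank_eq
  simpa [Matrix.rank] using h.rank_matrix

lemma range_mulVecLin_transpose_mul_transpose {l : Type*} [Fintype l] [DecidableEq n]
    (H : Matrix l n K) (X : Matrix m n K) (hH : LinearIndependent K Hᵀ) :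
    LinearMap.range ((H * Xᵀ)ᵀ).mulVecLin = LinearMap.range X.mulVecLin := by
  rw [transpose_mul, transpose_transpose, mulVecLin_mul]
  exact LinearMap.range_comp_of_range_eq_top _
    (LinearMap.range_eq_top.mpr (mulVecLin_surjective_of_linearIndependent hH))

end Range

lemma Submodule.mem_span_singleton_of_mem_of_mem_sup {R M : Type*} [Ring R] [AddCommGroup M]
    [Module R M] {A B : Submodule R M} (hAB : Disjoint A B) {u x : M} (hu : u ∈ A) (hx : x ∈ A)
    (hxB : x ∈ span R {u} ⊔ B) : x ∈ span R {u} := by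
  obtain ⟨y, hy, z, hz, rfl⟩ := mem_sup.mp hxB
  obtain ⟨a, rfl⟩ := mem_span_singleton.mp hy
  have hzA : z ∈ A := by simpa using A.sub_mem hx (A.smul_mem a hu)
  rw [(disjoint_def.mp hAB) z hzA hz, add_zero]
  exact hy

lemma mem_span_singleton_of_mem_range_of_mem_range {K : Type*} [Field K] {m n : Type*} [Fintype n]
    [DecidableEq n] {X₁ X₂ : Matrix m n K} {j₀ : n} {x : m → K}
    (hc₁ : X₁.col j₀ = x) (hc₂ : X₂.col j₀ = x)
    (hli : LinearIndependent K (Sum.elim X₁ᵀ fun j : {j : n // j ≠ j₀} => X₂ᵀ j.1))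
    {v : m → K} (hv₁ : v ∈ LinearMap.range X₁.mulVecLin)
    (hv₂ : v ∈ LinearMap.range X₂.mulVecLin) :
    v ∈ Submodule.span K {x} := by
  rw [range_mulVecLin] at hv₁ hv₂
  have hdisj := (linearIndependent_sum.mp hli).2.2
  refine Submodule.mem_span_singleton_of_mem_of_mem_sup hdisj
    (Submodule.subset_span ⟨j₀, hc₁⟩) hv₁ ((Submodule.span_le.mpr ?_) hv₂)
  rintro _ ⟨j, rfl⟩
  by_cases hj : j = j₀
  · subst hj
    exact Submodule.mem_sup_left (Submodule.subset_span hc₂)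
  · exact Submodule.mem_sup_right (Submodule.subset_span ⟨⟨j, hj⟩, rfl⟩)

/-- In the noiseless two-view model `Yi = Hi Xiᵀ` with `Hi` full column rank and
`X1, X2` sharing exactly one common column `x_c` (all `2L−1` distinct columns
linearly independent), every unit-norm maximizer `g⋆` of `gᴴ(P1+P2)g` — with `Pi`
the orthogonal projector onto `range(Yiᵀ)` — admits combiners `q1⋆, q2⋆` achieving
zero MAXVAR objective, `Y1ᵀq1⋆ = Y2ᵀq2⋆ = g⋆`, and the equalized signal `Yiᵀqi⋆`
is proportional to `x_c`. -/
theorem maxvar_optimal_combiners_equalize {Nr L Nb : ℕ} [NeZero L]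
    (H1 H2 : Matrix (Fin Nr) (Fin L) ℂ)
    (X1 X2 : Matrix (Fin Nb) (Fin L) ℂ)
    (xc : Fin Nb → ℂ) (hxc : xc ≠ 0)
    (hc1 : (fun i => X1 i 0) = xc) (hc2 : (fun i => X2 i 0) = xc)
    (hH1 : LinearIndependent ℂ H1ᵀ) (hH2 : LinearIndependent ℂ H2ᵀ)
    (hli : LinearIndependent ℂ
      (Sum.elim X1ᵀ (fun j : {j : Fin L // j ≠ 0} => X2ᵀ j.1)))
    (P1 P2 : Matrix (Fin Nb) (Fin Nb) ℂ)
    (hP1herm : P1ᴴ = P1) (hP2herm : P2ᴴ = P2)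
    (hP1idem : P1 * P1 = P1) (hP2idem : P2 * P2 = P2)
    (hP1range : LinearMap.range P1.mulVecLin =
      LinearMap.range ((H1 * X1ᵀ)ᵀ).mulVecLin)
    (hP2range : LinearMap.range P2.mulVecLin =
      LinearMap.range ((H2 * X2ᵀ)ᵀ).mulVecLin)
    (g : Fin Nb → ℂ) (hg : sqNorm g = 1)
    (hmax : ∀ g' : Fin Nb → ℂ, sqNorm g' = 1 →
      (star g' ⬝ᵥ (P1 + P2).mulVec g').re ≤ (star g ⬝ᵥ (P1 + P2).mulVec g).re) :
    ∃ (q1 q2 : Fin Nr → ℂ) (γ : ℂ),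
      ((H1 * X1ᵀ)ᵀ).mulVec q1 = g ∧ ((H2 * X2ᵀ)ᵀ).mulVec q2 = g ∧
      sqNorm (((H1 * X1ᵀ)ᵀ).mulVec q1 - g) +
        sqNorm (((H2 * X2ᵀ)ᵀ).mulVec q2 - g) = 0 ∧
      g = γ • xc := by
  have hr1 := range_mulVecLin_transpose_mul_transpose H1 X1 hH1
  have hr2 := range_mulVecLin_transpose_mul_transpose H2 X2 hH2
  have hxc1 : P1 *ᵥ xc = xc := mulVec_eq_self_of_mem_range hP1idem
    (hP1range ▸ hr1 ▸ ⟨Pi.single 0 1, (mulVec_single_one X1 0).trans hc1⟩)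
  have hxc2 : P2 *ᵥ xc = xc := mulVec_eq_self_of_mem_range hP2idem
    (hP2range ▸ hr2 ▸ ⟨Pi.single 0 1, (mulVec_single_one X2 0).trans hc2⟩)
  obtain ⟨hg1, hg2⟩ := mulVec_eq_self_of_isMax_add_of_isProjector hP1herm hP2herm hP1idem
    hP2idem hxc hxc1 hxc2 hg hmax
  have hgr1 : g ∈ LinearMap.range ((H1 * X1ᵀ)ᵀ).mulVecLin := hP1range ▸ ⟨g, hg1⟩
  have hgr2 : g ∈ LinearMap.range ((H2 * X2ᵀ)ᵀ).mulVecLin := hP2range ▸ ⟨g, hg2⟩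
  obtain ⟨γ, hγ⟩ := Submodule.mem_span_singleton.mp
    (mem_span_singleton_of_mem_range_of_mem_range hc1 hc2 hli (hr1 ▸ hgr1) (hr2 ▸ hgr2))
  obtain ⟨q1, hq1⟩ := hgr1
  obtain ⟨q2, hq2⟩ := hgr2
  refine ⟨q1, q2, γ, hq1, hq2, ?_, hγ.symm⟩
  rw [mulVecLin_apply] at hq1 hq2
  rw [hq1, hq2, sub_self]
  simp [sqNorm]
end
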